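/- arXiv:1810.08541 — 2 statements merged into one kernel-verified Lean document; each statement's English description precedes it below -/
import Mathlib

section
/- Fix R ≥ 0. For every ρ ∈ (0,1), one has log((ρ-1)/((R+1)·log ρ)) - ρ·(log ρ)/(ρ-1) + 1 < 0. -/
/-!
Write `B₁ ρ = log L - ρ / L + 1` with `L = (ρ - 1) / log ρ` the logarithmic mean of `ρ` and `1`;
the parameter `R` only adds `-log (R + 1) ≤ 0`. The derivative `log ρ / (ρ - 1)² - 1 / (ρ log ρ)`
of `B₁` is positive on `(0, 1)` because `L` exceeds the geometric mean `√ρ`, i.e. `u < sinh u` for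
`u = -log ρ / 2`. Hence `B₁` increases strictly towards its limit `0` at `1⁻`, where `L → 1`.
-/

open Real Filter Set Topology

/-- The paper's `B₁(ρ, 0)`. -/
noncomputable def B₁ (ρ : ℝ) : ℝ := log ((ρ - 1) / log ρ) - ρ * log ρ / (ρ - 1) + 1

theorem StrictMonoOn.lt_of_tendsto_nhdsLT {α β : Type*} [LinearOrder α] [TopologicalSpace α]
    [OrderTopology α] [DenselyOrdered α] [Preorder β] [TopologicalSpace β] [ClosedIciTopology β]
    {f : α → β} {a b x : α} {L : β} (hf : StrictMonoOn f (Ioo a b))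
    (hL : Tendsto f (𝓝[<] b) (𝓝 L)) (hx : x ∈ Ioo a b) : f x < L := by
  obtain ⟨y, hxy, hyb⟩ := exists_between hx.2
  have : NeBot (𝓝[<] b) := nhdsLT_neBot_of_exists_lt ⟨x, hx.2⟩
  have hy : y ∈ Ioo a b := ⟨hx.1.trans hxy, hyb⟩
  refine (hf hx hy hxy).trans_le (ge_of_tendsto hL ?_)
  filter_upwards [Ioo_mem_nhdsLT hyb] with z hz
  exact (hf hy ⟨hy.1.trans hz.1, hz.2⟩ hz.1).le

theorem mul_log_sq_lt_one_sub_sq {ρ : ℝ} (h0 : 0 < ρ) (h1 : ρ < 1) :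
    ρ * log ρ ^ 2 < (1 - ρ) ^ 2 := by
  -- with `ρ = exp (-2u)` both sides carry the factor `exp (-2u)`; what remains is `u² < sinh² u`
  set u := -log ρ / 2
  have hu : 0 < u := div_pos (neg_pos.mpr (log_neg h0 h1)) two_pos
  have hlog : log ρ = -2 * u := by simp only [u]; ring
  have hρ : ρ = exp (-u) ^ 2 := by rw [← exp_nat_mul, ← exp_log h0, hlog]; norm_num
  have hsinh : 1 - ρ = exp (-u) * (2 * sinh u) := by
    have : exp (-u) * exp u = 1 := by rw [← exp_add]; simp
    rw [hρ, sinh_eq]; linear_combination -this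
  rw [hsinh, hlog, hρ]
  have hsq : u ^ 2 < sinh u ^ 2 := pow_lt_pow_left₀ (self_lt_sinh_iff.mpr hu) hu.le two_ne_zero
  have := exp_pos (-u)
  nlinarith [mul_lt_mul_of_pos_left hsq (mul_pos this this)]

theorem hasDerivAt_B₁ {ρ : ℝ} (h0 : 0 < ρ) (h1 : ρ ≠ 1) :
    HasDerivAt B₁ (log ρ / (ρ - 1) ^ 2 - 1 / (ρ * log ρ)) ρ := by
  have hlog : log ρ ≠ 0 := log_ne_zero_of_pos_of_ne_one h0 h1
  have hsub : ρ - 1 ≠ 0 := sub_ne_zero.mpr h1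
  have hL := hasDerivAt_log h0.ne'
  have hquot := ((hasDerivAt_id' ρ).sub_const 1).div hL hlog
  have hprod := ((hasDerivAt_id' ρ).mul hL).div ((hasDerivAt_id' ρ).sub_const 1) hsub
  refine (((hquot.log (div_ne_zero hsub hlog)).sub hprod).add_const 1).congr_deriv ?_
  simp only [Pi.div_apply, Pi.mul_apply]
  field_simp
  ring

theorem strictMonoOn_B₁ : StrictMonoOn B₁ (Ioo 0 1) := by
  refine strictMonoOn_of_deriv_pos (convex_Ioo 0 1) (fun ρ hρ => ?_) (fun ρ hρ => ?_)
  · exact (hasDerivAt_B₁ hρ.1 hρ.2.ne).continuousAt.continuousWithinAt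
  rw [interior_Ioo] at hρ
  obtain ⟨h0, h1⟩ := hρ
  rw [(hasDerivAt_B₁ h0 h1.ne).deriv, sub_pos]
  have hlog : log ρ < 0 := log_neg h0 h1
  have hsq : 0 < (ρ - 1) ^ 2 := sq_pos_of_neg (sub_neg.mpr h1)
  rw [div_lt_iff_of_neg (mul_neg_of_pos_of_neg h0 hlog), div_mul_eq_mul_div, div_lt_one hsq]
  nlinarith [mul_log_sq_lt_one_sub_sq h0 h1]

theorem tendsto_log_div_sub_one_nhdsNE_one :
    Tendsto (fun ρ => log ρ / (ρ - 1)) (𝓝[≠] 1) (𝓝 1) := by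
  simpa [slope_fun_def_field] using hasDerivAt_iff_tendsto_slope.mp (hasDerivAt_log one_ne_zero)

theorem tendsto_B₁_nhdsNE_one : Tendsto B₁ (𝓝[≠] 1) (𝓝 0) := by
  have hslope := tendsto_log_div_sub_one_nhdsNE_one
  have hlogMean : Tendsto (fun ρ => log ((ρ - 1) / log ρ)) (𝓝[≠] 1) (𝓝 0) := by
    simpa [inv_div] using (hslope.inv₀ one_ne_zero).log (by norm_num)
  have hρ : Tendsto (fun ρ : ℝ => ρ) (𝓝[≠] 1) (𝓝 1) :=
    tendsto_nhdsWithin_of_tendsto_nhds tendsto_id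
  convert (hlogMean.sub (hρ.mul hslope)).add_const 1 using 2 with ρ
  · simp [B₁, mul_div_assoc]
  · norm_num

theorem B₁_neg {ρ : ℝ} (h0 : 0 < ρ) (h1 : ρ < 1) : B₁ ρ < 0 :=
  strictMonoOn_B₁.lt_of_tendsto_nhdsLT
    (tendsto_B₁_nhdsNE_one.mono_left (nhdsWithin_mono _ fun _ h => ne_of_lt h)) ⟨h0, h1⟩

/-- For `R ≥ 0` and `ρ ∈ (0,1)`,
`log((ρ-1)/((R+1)·log ρ)) - ρ·log ρ/(ρ-1) + 1 < 0`. -/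
theorem stmt_8 (R : ℝ) (hR : 0 ≤ R) :
    ∀ ρ : ℝ, 0 < ρ → ρ < 1 →
      Real.log ((ρ - 1) / ((R + 1) * Real.log ρ)) - ρ * Real.log ρ / (ρ - 1) + 1 < 0 := by
  intro ρ h0 h1
  have hR1 : 0 < R + 1 := by linarith
  have hlogMean : 0 < (ρ - 1) / log ρ := div_pos_of_neg_of_neg (by linarith) (log_neg h0 h1)
  have hsplit : log ((ρ - 1) / ((R + 1) * log ρ)) = log ((ρ - 1) / log ρ) - log (R + 1) := by
    rw [mul_comm, ← div_div, log_div hlogMean.ne' hR1.ne']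
  have hB₁ := B₁_neg h0 h1
  rw [B₁] at hB₁
  rw [hsplit]
  linarith [log_nonneg (by linarith : 1 ≤ R + 1)]
end

section
/- Fix R ≥ 0. The function w(ρ) = (1/log ρ)·log((ρ-1)/((R+1)·log ρ)) is (strictly) increasing in ρ on (0,1). -/
/-!
Put `x = -log ρ`, so that `x` decreases from `∞` to `0` as `ρ` runs through `(0,1)`. Then
`w(ρ) = 1 - H(x)/x + log(R+1)/x` with `H(x) = log((eˣ-1)/x)`, the cumulant generating function
of the uniform distribution on `[0,1]`. `H` is strictly convex (`H'' > 0` amounts to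
`x < 2 sinh(x/2)`) and `H(0) = 0`, so the secant slope `H(x)/x` strictly increases in `x`, while
`log(R+1)/x` does not increase because `R ≥ 0`.
-/
open Real Set Filter Topology

/-- `log ∫₀¹ eˣˢ ds`; at `x = 0` the conventions `x / 0 = 0` and `log 0 = 0` give the correct
value `0`. -/
noncomputable def uniformCgf (x : ℝ) : ℝ := Real.log ((Real.exp x - 1) / x)

lemma tendsto_exp_sub_one_div_nhdsNE_zero :
    Tendsto (fun x : ℝ => (exp x - 1) / x) (𝓝[≠] 0) (𝓝 1) := by
  have h := hasDerivAt_iff_tendsto_slope.mp (Real.hasDerivAt_exp 0)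
  rw [exp_zero] at h
  refine h.congr fun x => ?_
  simp [slope_def_field]

lemma exp_sub_one_div_pos {x : ℝ} (hx : x ≠ 0) : 0 < (exp x - 1) / x := by
  rcases hx.lt_or_gt with hx | hx
  · exact div_pos_of_neg_of_neg (by linarith [exp_lt_one_iff.mpr hx]) hx
  · exact div_pos (by linarith [one_lt_exp_iff.mpr hx]) hx

lemma continuous_uniformCgf : Continuous uniformCgf := by
  refine continuous_iff_continuousAt.mpr fun x => ?_
  rcases eq_or_ne x 0 with rfl | hx
  · have h := (continuousAt_log one_ne_zero).tendsto.comp tendsto_exp_sub_one_div_nhdsNE_zero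
    rw [log_one] at h
    rw [← continuousWithinAt_compl_self, ContinuousWithinAt,
      show uniformCgf 0 = 0 by simp [uniformCgf]]
    exact h
  · exact ((continuous_exp.sub continuous_const).continuousAt.div continuousAt_id hx).log
      (exp_sub_one_div_pos hx).ne'

lemma hasDerivAt_uniformCgf {x : ℝ} (hx : x ≠ 0) :
    HasDerivAt uniformCgf (exp x / (exp x - 1) - 1 / x) x := by
  have hE : exp x - 1 ≠ 0 := by simpa [sub_eq_zero] using hx
  have h := (((hasDerivAt_exp x).sub_const 1).div (hasDerivAt_id' x) hx).log
    (exp_sub_one_div_pos hx).ne'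
  simp only [Pi.div_apply] at h
  refine h.congr_deriv ?_
  field_simp

lemma sq_mul_exp_lt_sq_exp_sub_one {x : ℝ} (hx : 0 < x) : x ^ 2 * exp x < (exp x - 1) ^ 2 := by
  have hsinh : x < 2 * sinh (x / 2) := by linarith [self_lt_sinh_iff.mpr (half_pos hx)]
  have hsplit : exp x - 1 = exp (x / 2) * (2 * sinh (x / 2)) := by
    rw [sinh_eq, mul_div_cancel₀ _ two_ne_zero, mul_sub, ← exp_add, ← exp_add]
    ring_nf
    rw [exp_zero]
    ring
  have hexp : exp x = exp (x / 2) ^ 2 := by rw [← exp_nat_mul]; ring_nf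
  rw [hsplit, hexp, mul_pow, mul_comm]
  gcongr

lemma hasDerivAt_exp_div_exp_sub_one_sub_inv {x : ℝ} (hx : x ≠ 0) :
    HasDerivAt (fun x => exp x / (exp x - 1) - 1 / x) (1 / x ^ 2 - exp x / (exp x - 1) ^ 2) x := by
  have hE : exp x - 1 ≠ 0 := by simpa [sub_eq_zero] using hx
  have h := ((hasDerivAt_exp x).div ((hasDerivAt_exp x).sub_const 1) hE).sub
    ((hasDerivAt_const x (1 : ℝ)).div (hasDerivAt_id' x) hx)
  refine h.congr_deriv ?_
  field_simp
  ring

lemma strictMonoOn_deriv_uniformCgf : StrictMonoOn (deriv uniformCgf) (Ioi 0) := by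
  have hmono : StrictMonoOn (fun x => exp x / (exp x - 1) - 1 / x) (Ioi 0) := by
    refine strictMonoOn_of_deriv_pos (convex_Ioi 0) (fun x hx => ?_) fun x hx => ?_
    · exact (hasDerivAt_exp_div_exp_sub_one_sub_inv (ne_of_gt hx)).continuousAt.continuousWithinAt
    · rw [interior_Ioi] at hx
      have hE : 0 < exp x - 1 := by linarith [one_lt_exp_iff.mpr hx]
      rw [(hasDerivAt_exp_div_exp_sub_one_sub_inv (ne_of_gt hx)).deriv, sub_pos,
        div_lt_div_iff₀ (pow_pos hE 2) (pow_pos hx 2), one_mul, mul_comm]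
      exact sq_mul_exp_lt_sq_exp_sub_one hx
  exact hmono.congr fun x hx => ((hasDerivAt_uniformCgf (ne_of_gt hx)).deriv).symm

lemma strictConvexOn_uniformCgf : StrictConvexOn ℝ (Ici 0) uniformCgf :=
  StrictMonoOn.strictConvexOn_of_deriv (convex_Ici 0) continuous_uniformCgf.continuousOn
    (by rw [interior_Ici]; exact strictMonoOn_deriv_uniformCgf)

lemma strictMonoOn_uniformCgf_div : StrictMonoOn (fun x => uniformCgf x / x) (Ioi 0) := by
  intro x hx y hy hxy
  have h := strictConvexOn_uniformCgf.secant_strict_mono (a := 0) self_mem_Ici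
    (mem_Ici.mpr (le_of_lt hx)) (mem_Ici.mpr (le_of_lt hy)) (ne_of_gt hx) (ne_of_gt hy) hxy
  simpa [uniformCgf] using h

lemma one_div_log_mul_log_eq_uniformCgf {ρ c : ℝ} (hρ : 0 < ρ) (hρ1 : ρ ≠ 1) (hc : c ≠ 0) :
    1 / log ρ * log ((ρ - 1) / (c * log ρ))
      = 1 - uniformCgf (-log ρ) / (-log ρ) + log c / (-log ρ) := by
  set x := -log ρ with hx_def
  have hx : x ≠ 0 := neg_ne_zero.mpr (log_ne_zero_of_pos_of_ne_one hρ hρ1)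
  have hρx : ρ = exp (-x) := by rw [hx_def, neg_neg, exp_log hρ]
  have hlog : log ρ = -x := by rw [hx_def, neg_neg]
  have hq : (ρ - 1) / (c * log ρ) = exp (-x) * ((exp x - 1) / x) / c := by
    rw [hlog, hρx, exp_neg]
    field_simp
    ring
  rw [hq, log_div (mul_pos (exp_pos _) (exp_sub_one_div_pos hx)).ne' hc,
    log_mul (exp_ne_zero _) (exp_sub_one_div_pos hx).ne', log_exp, hlog, uniformCgf]
  field_simp
  ring

/-- For fixed `R ≥ 0`, the function
`w(ρ) = (1/log ρ)·log((ρ-1)/((R+1)·log ρ))` is strictly increasing on `(0,1)`. -/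
theorem stmt_9 (R : ℝ) (hR : 0 ≤ R) :
    StrictMonoOn
      (fun ρ : ℝ => (1 / Real.log ρ) * Real.log ((ρ - 1) / ((R + 1) * Real.log ρ)))
      (Set.Ioo 0 1) := by
  intro ρ₁ h₁ ρ₂ h₂ hlt
  have hc : R + 1 ≠ 0 := by positivity
  simp only [one_div_log_mul_log_eq_uniformCgf h₁.1 h₁.2.ne hc,
    one_div_log_mul_log_eq_uniformCgf h₂.1 h₂.2.ne hc]
  have hx₂ : 0 < -log ρ₂ := neg_pos.mpr (log_neg h₂.1 h₂.2)
  have hx : -log ρ₂ < -log ρ₁ := neg_lt_neg (log_lt_log h₁.1 hlt)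
  have hslope : uniformCgf (-log ρ₂) / -log ρ₂ < uniformCgf (-log ρ₁) / -log ρ₁ :=
    strictMonoOn_uniformCgf_div hx₂ (hx₂.trans hx) hx
  have hshift : log (R + 1) / -log ρ₁ ≤ log (R + 1) / -log ρ₂ :=
    div_le_div_of_nonneg_left (log_nonneg (by linarith)) hx₂ hx.le
  linarith
end
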